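/- arXiv:2407.11958 — 2 statements merged into one kernel-verified Lean document; each statement's English description precedes it below -/
import Mathlib

section
/- Let 𝒞 be a category with finite limits (the paper's case is the category of affine schemes over a base ring, i.e. the opposite of the category of commutative algebras). For a presheaf F : 𝒞ᵒᵖ ⥤ Type, an object A of 𝒞 and a morphism x : y(A) ⟶ F (where y is the Yoneda embedding), the stabilizer of the point x is the pullback Stab_F(x) := y(A) ×_F y(A) of x along itself, computed in the category of presheaves; say that F has representable stabilizers if Stab_F(x) is a representable presheaf for every object A and every point x : y(A) ⟶ F. Then for any cospan of presheaves Y ⟶ W ⟵ Z such that both Y and Z have representable stabilizers, the fibre product presheaf Y ×_W Z also has representable stabilizers. -/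
/-!
A point `x : y(A) ⟶ Y ×_W Z` is determined by its components `x₁ : y(A) ⟶ Y` and
`x₂ : y(A) ⟶ Z`, so two `S`-points of `y(A)` are identified by `x` exactly when they are
identified by both `x₁` and `x₂`. Hence `Stab(x) ≅ Stab(x₁) ×_{y(A) ⨯ y(A)} Stab(x₂)`, a finite
limit of representable presheaves, which is representable because the Yoneda embedding
preserves limits and `C` has finite limits.
-/

open CategoryTheory Limits

universe u

/-- The stabilizer of a point `x : y(A) ⟶ F` of a presheaf `F` is the self-pullback
`y(A) ×_F y(A)` of `x` along itself, computed in the category of presheaves.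
`F` has representable stabilizers if all of these pullbacks are representable presheaves. -/
def HasRepresentableStabilizers {C : Type u} [SmallCategory C]
    (F : Cᵒᵖ ⥤ Type u) : Prop :=
  ∀ (A : C) (x : yoneda.obj A ⟶ F), (pullback x x).IsRepresentable

theorem isPullback_pullback_self_of_hom_ext {𝒞 : Type*} [Category 𝒞] [HasPullbacks 𝒞]
    [HasBinaryProducts 𝒞] {T P Y Z : 𝒞} (x : T ⟶ P) (p : P ⟶ Y) (q : P ⟶ Z)
    (hpq : ∀ {S : 𝒞} (a b : S ⟶ P), a ≫ p = b ≫ p → a ≫ q = b ≫ q → a = b) :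
    IsPullback
      (pullback.lift (pullback.fst x x) (pullback.snd x x) (pullback.condition_assoc p))
      (pullback.lift (pullback.fst x x) (pullback.snd x x) (pullback.condition_assoc q))
      (prod.lift (pullback.fst (x ≫ p) (x ≫ p)) (pullback.snd _ _))
      (prod.lift (pullback.fst (x ≫ q) (x ≫ q)) (pullback.snd _ _)) := by
  have legs (s : PullbackCone (prod.lift (pullback.fst (x ≫ p) (x ≫ p)) (pullback.snd _ _))
      (prod.lift (pullback.fst (x ≫ q) (x ≫ q)) (pullback.snd _ _))) :
      s.fst ≫ pullback.fst _ _ = s.snd ≫ pullback.fst _ _ ∧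
        s.fst ≫ pullback.snd _ _ = s.snd ≫ pullback.snd _ _ :=
    ⟨by simpa [prod.lift_fst] using s.condition =≫ prod.fst,
      by simpa [prod.lift_snd] using s.condition =≫ prod.snd⟩
  refine ⟨⟨by ext <;> simp [prod.lift_fst, prod.lift_snd, pullback.lift_fst, pullback.lift_snd]⟩,
    ⟨PullbackCone.IsLimit.mk _
      (fun s => pullback.lift (s.fst ≫ pullback.fst _ _) (s.fst ≫ pullback.snd _ _) ?_)
      (fun s => ?_) (fun s => ?_) (fun s m hm _ => ?_)⟩⟩
  · apply hpq
    · simp [pullback.condition]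
    · simp [(legs s).1, (legs s).2, pullback.condition]
  · ext <;> simp [pullback.lift_fst, pullback.lift_snd]
  · ext <;> simp [pullback.lift_fst, pullback.lift_snd, (legs s).1, (legs s).2]
  · ext
    · simpa [pullback.lift_fst] using hm =≫ pullback.fst _ _
    · simpa [pullback.lift_snd] using hm =≫ pullback.snd _ _

namespace CategoryTheory.Functor

variable {C : Type u} [SmallCategory C]

theorem isRepresentable_iff_mem_essImage_yoneda (F : Cᵒᵖ ⥤ Type u) :
    F.IsRepresentable ↔ yoneda.essImage F :=
  ⟨fun _ => ⟨F.reprX, ⟨F.reprW⟩⟩, fun ⟨_, ⟨e⟩⟩ => IsRepresentable.mk' e⟩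

theorem isRepresentable_of_isLimit {J : Type*} [Category J] [HasLimitsOfShape J C]
    {K : J ⥤ Cᵒᵖ ⥤ Type u} {c : Cone K} (hc : IsLimit c)
    (hK : ∀ j, (K.obj j).IsRepresentable) : c.pt.IsRepresentable := by
  simp only [isRepresentable_iff_mem_essImage_yoneda] at hK ⊢
  exact yoneda.essImage.prop_of_isLimit hc hK

instance isRepresentable_prod [HasBinaryProducts C] (F G : Cᵒᵖ ⥤ Type u)
    [F.IsRepresentable] [G.IsRepresentable] : (F ⨯ G).IsRepresentable :=
  isRepresentable_of_isLimit (limit.isLimit (pair F G)) (by rintro ⟨_ | _⟩ <;> assumption)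

theorem isRepresentable_of_isPullback [HasPullbacks C] {P X Y S : Cᵒᵖ ⥤ Type u}
    {fst : P ⟶ X} {snd : P ⟶ Y} {f : X ⟶ S} {g : Y ⟶ S} (h : IsPullback fst snd f g)
    [X.IsRepresentable] [Y.IsRepresentable] [S.IsRepresentable] : P.IsRepresentable :=
  isRepresentable_of_isLimit h.isLimit (by rintro (_ | _ | _) <;> assumption)

end CategoryTheory.Functor

/-- A fibre product of presheaves with representable stabilizers has representable
stabilizers. -/
theorem fibreProduct_hasRepresentableStabilizers
    {C : Type u} [SmallCategory C] [HasFiniteLimits C]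
    {Y W Z : Cᵒᵖ ⥤ Type u} (f : Y ⟶ W) (g : Z ⟶ W)
    (hY : HasRepresentableStabilizers Y) (hZ : HasRepresentableStabilizers Z) :
    HasRepresentableStabilizers (pullback f g) := by
  intro A x
  have := hY A (x ≫ pullback.fst f g)
  have := hZ A (x ≫ pullback.snd f g)
  exact Functor.isRepresentable_of_isPullback
    (isPullback_pullback_self_of_hom_ext x _ _ fun _ _ => pullback.hom_ext)
end

section
/- Let 𝒞 be a category with finite limits. Let f : Y ⟶ W and g : Z ⟶ W be morphisms, let P := Y ×_W Z be their pullback with projections p₁ : P ⟶ Y and p₂ : P ⟶ Z, let x : A ⟶ P be a morphism, and write x_Y := x ≫ p₁ and x_Z := x ≫ p₂. Then there is an isomorphism A ×_P A ≅ (A ×_Y A) ×_{A × A} (A ×_Z A), where A ×_P A is the pullback of x along itself, A ×_Y A is the pullback of x_Y along itself, A ×_Z A is the pullback of x_Z along itself, the morphism A ×_Y A ⟶ A × A is the pairing of the two pullback projections (and likewise for A ×_Z A), and the fibre product on the right is taken over these two morphisms; moreover, the isomorphism is compatible with the canonical morphisms of both sides to A × A. -/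
open CategoryTheory Limits

universe v u

/-! The pullback projections `p₁, p₂` of `P` are jointly monic, so two generalized points of `A`
have the same image under `x` exactly when they have the same images under both `x ≫ p₁` and
`x ≫ p₂`. Read inside `A ⨯ A`, this says that `A ×_P A` is the intersection of `A ×_Y A` and
`A ×_Z A`, i.e. their fibre product over `A ⨯ A`. -/

section

variable {C : Type u} [Category.{v} C] {A P Y Z : C}

noncomputable def selfPullbackMap (x : A ⟶ P) (p : P ⟶ Y) [HasPullback x x]
    [HasPullback (x ≫ p) (x ≫ p)] : pullback x x ⟶ pullback (x ≫ p) (x ≫ p) :=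
  pullback.lift (pullback.fst x x) (pullback.snd x x) (pullback.condition_assoc p)

@[simp]
lemma selfPullbackMap_fst (x : A ⟶ P) (p : P ⟶ Y) [HasPullback x x]
    [HasPullback (x ≫ p) (x ≫ p)] :
    selfPullbackMap x p ≫ pullback.fst (x ≫ p) (x ≫ p) = pullback.fst x x :=
  pullback.lift_fst _ _ _

@[simp]
lemma selfPullbackMap_snd (x : A ⟶ P) (p : P ⟶ Y) [HasPullback x x]
    [HasPullback (x ≫ p) (x ≫ p)] :
    selfPullbackMap x p ≫ pullback.snd (x ≫ p) (x ≫ p) = pullback.snd x x :=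
  pullback.lift_snd _ _ _

lemma selfPullbackMap_prodLift (x : A ⟶ P) (p : P ⟶ Y) [HasPullback x x]
    [HasPullback (x ≫ p) (x ≫ p)] [HasBinaryProduct A A] :
    selfPullbackMap x p ≫
        prod.lift (pullback.fst (x ≫ p) (x ≫ p)) (pullback.snd (x ≫ p) (x ≫ p)) =
      prod.lift (pullback.fst x x) (pullback.snd x x) := by
  rw [prod.comp_lift, selfPullbackMap_fst, selfPullbackMap_snd]

theorem isPullback_selfPullbackMap (x : A ⟶ P) (p₁ : P ⟶ Y) (p₂ : P ⟶ Z)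
    (hp : ∀ {T : C} (a b : T ⟶ P), a ≫ p₁ = b ≫ p₁ → a ≫ p₂ = b ≫ p₂ → a = b)
    [HasPullback x x] [HasPullback (x ≫ p₁) (x ≫ p₁)] [HasPullback (x ≫ p₂) (x ≫ p₂)]
    [HasBinaryProduct A A] :
    IsPullback (selfPullbackMap x p₁) (selfPullbackMap x p₂)
      (prod.lift (pullback.fst (x ≫ p₁) (x ≫ p₁)) (pullback.snd (x ≫ p₁) (x ≫ p₁)))
      (prod.lift (pullback.fst (x ≫ p₂) (x ≫ p₂)) (pullback.snd (x ≫ p₂) (x ≫ p₂))) := by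
  have legs {T : C} {u₁ : T ⟶ pullback (x ≫ p₁) (x ≫ p₁)} {u₂ : T ⟶ pullback (x ≫ p₂) (x ≫ p₂)}
      (h : u₁ ≫ prod.lift (pullback.fst _ _) (pullback.snd _ _) =
        u₂ ≫ prod.lift (pullback.fst _ _) (pullback.snd _ _)) :
      u₁ ≫ pullback.fst _ _ = u₂ ≫ pullback.fst _ _ ∧
        u₁ ≫ pullback.snd _ _ = u₂ ≫ pullback.snd _ _ :=
    ⟨by simpa only [Category.assoc, prod.lift_fst] using h =≫ prod.fst,
      by simpa only [Category.assoc, prod.lift_snd] using h =≫ prod.snd⟩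
  have cond (s : PullbackCone (prod.lift (pullback.fst (x ≫ p₁) (x ≫ p₁)) (pullback.snd _ _))
      (prod.lift (pullback.fst (x ≫ p₂) (x ≫ p₂)) (pullback.snd _ _))) :
      (s.fst ≫ pullback.fst _ _) ≫ x = (s.fst ≫ pullback.snd _ _) ≫ x := by
    obtain ⟨hfst, hsnd⟩ := legs s.condition
    apply hp
    · simp only [Category.assoc, pullback.condition]
    · simp only [Category.assoc, reassoc_of% hfst, reassoc_of% hsnd, pullback.condition]
  refine .of_isLimit' ⟨by simp only [selfPullbackMap_prodLift]⟩ <|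
    PullbackCone.IsLimit.mk _ (fun s => pullback.lift _ _ (cond s)) (fun s => ?_) (fun s => ?_)
      (fun s m hm _ => ?_)
  · ext <;> simp [pullback.lift_fst, pullback.lift_snd]
  · obtain ⟨hfst, hsnd⟩ := legs s.condition
    ext <;> simp [pullback.lift_fst, pullback.lift_snd, hfst, hsnd]
  · ext <;> simp [pullback.lift_fst, pullback.lift_snd, ← hm]

end

/-- For a pullback `P = Y ×_W Z` and a point `x : A ⟶ P` with projections
`x_Y := x ≫ p₁` and `x_Z := x ≫ p₂`, the self-pullback (stabilizer) `A ×_P A` of `x`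
is isomorphic to the fibre product `(A ×_Y A) ×_{A × A} (A ×_Z A)` of the self-pullbacks
of `x_Y` and `x_Z` over `A × A`, where each self-pullback maps to `A × A` by the pairing
of its two projections; the isomorphism is compatible with the canonical morphisms of
both sides to `A × A`. -/
theorem stabilizer_of_pullback_point
    {C : Type u} [Category.{v} C] [HasFiniteLimits C]
    {Y W Z A : C} (f : Y ⟶ W) (g : Z ⟶ W)
    (x : A ⟶ pullback f g) :
    ∃ e : pullback x x ≅
        pullback
          (prod.lift (pullback.fst (x ≫ pullback.fst f g) (x ≫ pullback.fst f g))
            (pullback.snd (x ≫ pullback.fst f g) (x ≫ pullback.fst f g)))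
          (prod.lift (pullback.fst (x ≫ pullback.snd f g) (x ≫ pullback.snd f g))
            (pullback.snd (x ≫ pullback.snd f g) (x ≫ pullback.snd f g))),
      (e.hom ≫
          pullback.fst
            (prod.lift (pullback.fst (x ≫ pullback.fst f g) (x ≫ pullback.fst f g))
              (pullback.snd (x ≫ pullback.fst f g) (x ≫ pullback.fst f g)))
            (prod.lift (pullback.fst (x ≫ pullback.snd f g) (x ≫ pullback.snd f g))
              (pullback.snd (x ≫ pullback.snd f g) (x ≫ pullback.snd f g))) ≫
          prod.lift (pullback.fst (x ≫ pullback.fst f g) (x ≫ pullback.fst f g))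
            (pullback.snd (x ≫ pullback.fst f g) (x ≫ pullback.fst f g)) =
        prod.lift (pullback.fst x x) (pullback.snd x x)) ∧
      (e.hom ≫
          pullback.snd
            (prod.lift (pullback.fst (x ≫ pullback.fst f g) (x ≫ pullback.fst f g))
              (pullback.snd (x ≫ pullback.fst f g) (x ≫ pullback.fst f g)))
            (prod.lift (pullback.fst (x ≫ pullback.snd f g) (x ≫ pullback.snd f g))
              (pullback.snd (x ≫ pullback.snd f g) (x ≫ pullback.snd f g))) ≫
          prod.lift (pullback.fst (x ≫ pullback.snd f g) (x ≫ pullback.snd f g))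
            (pullback.snd (x ≫ pullback.snd f g) (x ≫ pullback.snd f g)) =
        prod.lift (pullback.fst x x) (pullback.snd x x)) := by
  have h := isPullback_selfPullbackMap x (pullback.fst f g) (pullback.snd f g)
    fun _ _ h₁ h₂ => pullback.hom_ext h₁ h₂
  exact ⟨h.isoPullback,
    by rw [h.isoPullback_hom_fst_assoc, selfPullbackMap_prodLift],
    by rw [h.isoPullback_hom_snd_assoc, selfPullbackMap_prodLift]⟩
end
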